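/- arXiv:1912.00539 — 7 statements merged into one kernel-verified Lean document; each statement's English description precedes it below -/
import Mathlib

section
/- Suppose there exist a vector v ∈ ℝⁿ with v > 0 and a scalar α < 1 such that |B| v ≤ α v componentwise. Then the matrix I − B is invertible, and every chaotic relaxation (x^j) for (B, c) (for any initial vector x⁰, any admissible shift functions and any admissible update function) converges: x^j → x* as j → ∞, where x* is the unique solution of x = B x + c. -/
/-!
Errors are bounded componentwise by multiples of `v`, i.e. in the weighted sup-norm
`max_i |y i| / v i`, which `B` contracts by the factor `a`; hence `B y = y` forces `y = 0`.
In a chaotic relaxation an update sets one error component to a row of `B` applied to delayed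
errors, so a bound `|e_j| ≤ K v` holding from some time on persists, and once every component
has been updated after all delays reach into that time range, it improves to `a K v`. Bounded
delays and infinitely many updates of each component make this happen again and again.
-/

open Filter Topology

/-- A chaotic relaxation for the pair `(B, c)`: a sequence `x` of vectors together with
shift functions `s` and an update function `u` satisfying the Chazan–Miranker conditions. -/
def IsChaoticRelaxation {n : ℕ} (B : Matrix (Fin n) (Fin n) ℝ) (c : Fin n → ℝ)
    (x : ℕ → Fin n → ℝ) (s : Fin n → ℕ → ℕ) (u : ℕ → Fin n) : Prop :=
  (∀ j : ℕ, 1 ≤ j → ∀ i : Fin n,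
      (i ≠ u j → x (j + 1) i = x j i) ∧
      (i = u j → x (j + 1) i = (∑ α : Fin n, B i α * x (j - s α j) α) + c i)) ∧
  (∃ shat : ℕ, ∀ (α : Fin n) (j : ℕ), 1 ≤ j → s α j ≤ min (j - 1) shat) ∧
  (∀ (i : Fin n) (j : ℕ), 1 ≤ j → ∃ l : ℕ, j < l ∧ u l = i)

theorem tendsto_pi_of_forall_eventually_abs_sub_le_pow_mul {ι β : Type*} [Finite ι]
    {l : Filter β} {x : β → ι → ℝ} {y w : ι → ℝ} {a : ℝ} (ha0 : 0 ≤ a) (ha : a < 1)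
    (h : ∀ k : ℕ, ∀ᶠ j in l, ∀ i, |x j i - y i| ≤ a ^ k * w i) :
    Tendsto x l (𝓝 y) := by
  refine tendsto_pi_nhds.2 fun i => Metric.tendsto_nhds.2 fun ε hε => ?_
  have hlim : Tendsto (fun k : ℕ => a ^ k * w i) atTop (𝓝 0) := by
    simpa using (tendsto_pow_atTop_nhds_zero_of_lt_one ha0 ha).mul_const (w i)
  obtain ⟨k, hk⟩ := (hlim.eventually (gt_mem_nhds hε)).exists
  filter_upwards [h k] with j hj
  exact (Real.dist_eq _ _).symm ▸ (hj i).trans_lt hk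

theorem abs_le_sum_abs_div_mul {ι : Type*} [Fintype ι] {v : ι → ℝ} (hv : ∀ i, 0 < v i)
    (y : ι → ℝ) (i : ι) : |y i| ≤ (∑ j, |y j| / v j) * v i := by
  rw [← div_le_iff₀ (hv i)]
  exact Finset.single_le_sum (fun j _ => div_nonneg (abs_nonneg _) (hv j).le)
    (Finset.mem_univ i)

namespace Matrix

variable {ι : Type*} [Fintype ι] {B : Matrix ι ι ℝ} {v : ι → ℝ} {a : ℝ}

theorem abs_mulVec_le_of_abs_le_mul (hBv : ∀ i, ∑ j, |B i j| * v j ≤ a * v i)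
    {K : ℝ} (hK : 0 ≤ K) {y : ι → ℝ} (hy : ∀ j, |y j| ≤ K * v j) (i : ι) :
    |(B *ᵥ y) i| ≤ a * K * v i :=
  calc |(B *ᵥ y) i| = |∑ j, B i j * y j| := rfl
    _ ≤ ∑ j, |B i j| * |y j| := by
      simpa only [abs_mul] using Finset.abs_sum_le_sum_abs (fun j => B i j * y j) Finset.univ
    _ ≤ ∑ j, |B i j| * (K * v j) :=
      Finset.sum_le_sum fun j _ => mul_le_mul_of_nonneg_left (hy j) (abs_nonneg _)
    _ = K * ∑ j, |B i j| * v j := by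
      rw [Finset.mul_sum]; exact Finset.sum_congr rfl fun j _ => by ring
    _ ≤ K * (a * v i) := mul_le_mul_of_nonneg_left (hBv i) hK
    _ = a * K * v i := by ring

theorem eq_zero_of_mulVec_eq_self_of_abs_contraction (hv : ∀ i, 0 < v i) (ha0 : 0 ≤ a)
    (ha : a < 1) (hBv : ∀ i, ∑ j, |B i j| * v j ≤ a * v i) {y : ι → ℝ} (hy : B *ᵥ y = y) :
    y = 0 := by
  set K := ∑ j, |y j| / v j
  have hK : 0 ≤ K := Finset.sum_nonneg fun j _ => div_nonneg (abs_nonneg _) (hv j).le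
  have hbound : ∀ k : ℕ, ∀ i, |y i| ≤ a ^ k * K * v i := by
    intro k
    induction k with
    | zero => simpa using abs_le_sum_abs_div_mul hv y
    | succ k ih =>
      rw [← hy, pow_succ', mul_assoc]
      exact abs_mulVec_le_of_abs_le_mul hBv (mul_nonneg (pow_nonneg ha0 k) hK) ih
  have hlim : Tendsto (fun _ : ℕ => y) atTop (𝓝 0) :=
    tendsto_pi_of_forall_eventually_abs_sub_le_pow_mul (w := fun i => K * v i) ha0 ha
      fun k => .of_forall fun _ i => by simpa [mul_assoc] using hbound k i
  exact tendsto_const_nhds_iff.1 hlim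

theorem isUnit_one_sub_of_abs_contraction [DecidableEq ι] (hv : ∀ i, 0 < v i) (ha0 : 0 ≤ a)
    (ha : a < 1) (hBv : ∀ i, ∑ j, |B i j| * v j ≤ a * v i) : IsUnit (1 - B) := by
  rw [isUnit_iff_isUnit_det, isUnit_iff_ne_zero, Ne, ← exists_mulVec_eq_zero_iff]
  rintro ⟨y, hy0, hy⟩
  rw [sub_mulVec, one_mulVec, sub_eq_zero] at hy
  exact hy0 (eq_zero_of_mulVec_eq_self_of_abs_contraction hv ha0 ha hBv hy.symm)

end Matrix

namespace IsChaoticRelaxation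

open scoped Matrix

variable {n : ℕ} {B : Matrix (Fin n) (Fin n) ℝ} {c xs v : Fin n → ℝ} {a K : ℝ}
  {x : ℕ → Fin n → ℝ} {s : Fin n → ℕ → ℕ} {u : ℕ → Fin n}

theorem abs_sub_update_le (hx : IsChaoticRelaxation B c x s u) (hxs : xs = B *ᵥ xs + c)
    (hBv : ∀ i, ∑ j, |B i j| * v j ≤ a * v i) (hK : 0 ≤ K) {j : ℕ} (hj : 1 ≤ j)
    (hdelay : ∀ α, |x (j - s α j) α - xs α| ≤ K * v α) :
    |x (j + 1) (u j) - xs (u j)| ≤ a * K * v (u j) := by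
  have herr : x (j + 1) (u j) - xs (u j) = (B *ᵥ fun α => x (j - s α j) α - xs α) (u j) := by
    have hfix := congrFun hxs (u j)
    rw [(hx.1 j hj (u j)).2 rfl]
    simp only [Pi.add_apply, Matrix.mulVec, dotProduct, mul_sub, Finset.sum_sub_distrib] at hfix ⊢
    linarith
  rw [herr]
  exact Matrix.abs_mulVec_le_of_abs_le_mul hBv hK hdelay _

theorem abs_sub_le_of_abs_sub_one_le (hx : IsChaoticRelaxation B c x s u)
    (hxs : xs = B *ᵥ xs + c) (hBv : ∀ i, ∑ j, |B i j| * v j ≤ a * v i) (hv : ∀ i, 0 < v i)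
    (ha : a ≤ 1) (hK : 0 ≤ K) (h1 : ∀ i, |x 1 i - xs i| ≤ K * v i) :
    ∀ j, 1 ≤ j → ∀ i, |x j i - xs i| ≤ K * v i := by
  obtain ⟨shat, hs⟩ := hx.2.1
  intro j
  induction j using Nat.strong_induction_on with
  | _ j ih =>
    intro hj i
    rcases eq_or_lt_of_le hj with rfl | hj
    · exact h1 i
    obtain ⟨j, rfl⟩ : ∃ j', j = j' + 1 := ⟨j - 1, by omega⟩
    have hj1 : 1 ≤ j := by omega
    rcases eq_or_ne i (u j) with rfl | hi
    · refine (hx.abs_sub_update_le hxs hBv hK hj1 fun α => ?_).trans ?_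
      · have := hs α j hj1
        exact ih _ (by omega) (by omega) α
      · exact mul_le_mul_of_nonneg_right (mul_le_of_le_one_left hK ha) (hv _).le
    · rw [(hx.1 j hj1 i).1 hi]
      exact ih j (by omega) hj1 i

theorem eventually_abs_sub_le_mul (hx : IsChaoticRelaxation B c x s u)
    (hxs : xs = B *ᵥ xs + c) (hBv : ∀ i, ∑ j, |B i j| * v j ≤ a * v i) (hK : 0 ≤ K)
    (hev : ∀ᶠ j in atTop, ∀ i, |x j i - xs i| ≤ K * v i) :
    ∀ᶠ j in atTop, ∀ i, |x j i - xs i| ≤ a * K * v i := by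
  obtain ⟨T, hT⟩ := eventually_atTop.1 hev
  obtain ⟨shat, hs⟩ := hx.2.1
  refine eventually_all.2 fun i => ?_
  obtain ⟨l, hl, rfl⟩ := hx.2.2 i (T + shat + 1) (by omega)
  -- from time `l` on, every delayed argument of an update lies in the range where `hT` holds
  have hupdate : ∀ j, l ≤ j → |x (j + 1) (u j) - xs (u j)| ≤ a * K * v (u j) := fun j hj =>
    hx.abs_sub_update_le hxs hBv hK (by omega) fun α => by
      have := hs α j (by omega)
      exact hT _ (by omega) α
  refine eventually_atTop.2 ⟨l + 1, fun j hj => ?_⟩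
  induction j, hj using Nat.le_induction with
  | base => exact hupdate l le_rfl
  | succ j hj ih =>
    rcases eq_or_ne (u l) (u j) with h | h
    · exact h ▸ hupdate j (by omega)
    · rwa [(hx.1 j (by omega) (u l)).1 h]

theorem tendsto (hx : IsChaoticRelaxation B c x s u) (hxs : xs = B *ᵥ xs + c)
    (hv : ∀ i, 0 < v i) (ha0 : 0 ≤ a) (ha : a < 1)
    (hBv : ∀ i, ∑ j, |B i j| * v j ≤ a * v i) : Tendsto x atTop (𝓝 xs) := by
  set K := ∑ j, |x 1 j - xs j| / v j
  have hK : 0 ≤ K := Finset.sum_nonneg fun j _ => div_nonneg (abs_nonneg _) (hv j).le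
  have hbound : ∀ k : ℕ, ∀ᶠ j in atTop, ∀ i, |x j i - xs i| ≤ a ^ k * K * v i := by
    intro k
    induction k with
    | zero =>
      simpa using eventually_atTop.2 ⟨1, hx.abs_sub_le_of_abs_sub_one_le hxs hBv hv ha.le hK
        (abs_le_sum_abs_div_mul hv (x 1 - xs))⟩
    | succ k ih =>
      rw [pow_succ', mul_assoc]
      exact hx.eventually_abs_sub_le_mul hxs hBv (mul_nonneg (pow_nonneg ha0 k) hK) ih
  exact tendsto_pi_of_forall_eventually_abs_sub_le_pow_mul (w := fun i => K * v i) ha0 ha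
    fun k => by simpa only [mul_assoc] using hbound k

end IsChaoticRelaxation

theorem chaotic_relaxation_converges_of_abs_contraction_general
    {n : ℕ} (B : Matrix (Fin n) (Fin n) ℝ) (c : Fin n → ℝ)
    (v : Fin n → ℝ) (a : ℝ) (hv : ∀ i, 0 < v i) (ha : a < 1)
    (hBv : ∀ i, (∑ j : Fin n, |B i j| * v j) ≤ a * v i) :
    IsUnit ((1 : Matrix (Fin n) (Fin n) ℝ) - B) ∧
    ∀ xs : Fin n → ℝ, xs = B.mulVec xs + c →
      ∀ (x : ℕ → Fin n → ℝ) (s : Fin n → ℕ → ℕ) (u : ℕ → Fin n),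
        IsChaoticRelaxation B c x s u →
        Tendsto x atTop (𝓝 xs) := by
  have ha0 : 0 ≤ max a 0 := le_max_right a 0
  have ha' : max a 0 < 1 := max_lt ha one_pos
  have hBv' : ∀ i, ∑ j, |B i j| * v j ≤ max a 0 * v i := fun i =>
    (hBv i).trans (mul_le_mul_of_nonneg_right (le_max_left a 0) (hv i).le)
  exact ⟨Matrix.isUnit_one_sub_of_abs_contraction hv ha0 ha' hBv',
    fun xs hxs x s u hx => hx.tendsto hxs hv ha0 ha' hBv'⟩

/-- If there are `v > 0` (componentwise) and `α < 1` with `|B| v ≤ α v` componentwise,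
then `I - B` is invertible and every chaotic relaxation for `(B, c)` converges to the
unique solution of `x = B x + c`. -/
theorem chaotic_relaxation_converges_of_abs_contraction
    {n : ℕ} (hn : 1 ≤ n) (B : Matrix (Fin n) (Fin n) ℝ) (c : Fin n → ℝ)
    (v : Fin n → ℝ) (a : ℝ) (hv : ∀ i, 0 < v i) (ha : a < 1)
    (hBv : ∀ i, (∑ j : Fin n, |B i j| * v j) ≤ a * v i) :
    IsUnit ((1 : Matrix (Fin n) (Fin n) ℝ) - B) ∧
    ∀ xs : Fin n → ℝ, xs = B.mulVec xs + c →
      ∀ (x : ℕ → Fin n → ℝ) (s : Fin n → ℕ → ℕ) (u : ℕ → Fin n),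
        IsChaoticRelaxation B c x s u →
        Tendsto x atTop (𝓝 xs) :=
  chaotic_relaxation_converges_of_abs_contraction_general B c v a hv ha hBv
end

section
/- Suppose no vector v ∈ ℝⁿ with v > 0 and scalar α < 1 satisfy |B| v ≤ α v componentwise. Then there exist a vector c ∈ ℝⁿ, an initial vector x⁰ ∈ ℝⁿ, and admissible shift functions and an admissible update function (depending only on B) such that the resulting chaotic relaxation for (B, c) does not converge. -/
/-!
Put `h_k = |B| ^ k 𝟙`, `m_0 = 0`, `m_{k+1} = B m_k + c` with `c = -B 𝟙 - 𝟙`, and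
`w_{2k} = m_k + h_k`, `w_{2k+1} = m_k - h_k`. Then `w_{r+1} = B ŵ + c`, where each entry `ŵ_γ` is
read from `w_{2k}` or `w_{2k+1}` according to the sign of `B_{iγ}`, so that
`B_{iγ} ŵ_γ = B_{iγ} (m_k)_γ ± |B_{iγ}| (h_k)_γ`. Sweeping the components cyclically, with delays of
at most three sweeps, realises `w` as a chaotic relaxation. If it converged, then
`h_k = (w_{2k} - w_{2k+1}) / 2 → 0`; but once `h_k ≤ 𝟙 / 2`, the vector `v = ∑_{m<k} θ^m h_m` with
`θ^k = 2` is positive and satisfies `|B| v ≤ θ⁻¹ v`.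
-/

open Filter Topology

open Matrix Finset

namespace Matrix

variable {ι : Type*} [Fintype ι] [DecidableEq ι] {A : Matrix ι ι ℝ}

lemma pow_mulVec_nonneg (hA : ∀ i j, 0 ≤ A i j) {v : ι → ℝ} (hv : 0 ≤ v) (m : ℕ) :
    0 ≤ A ^ m *ᵥ v := by
  induction m with
  | zero => simpa using hv
  | succ m ih =>
    intro i
    rw [pow_succ', ← mulVec_mulVec]
    exact Finset.sum_nonneg fun j _ => mul_nonneg (hA i j) (ih j)

lemma exists_pos_mulVec_le_smul_of_pow_mulVec_le (hA : ∀ i j, 0 ≤ A i j) {k : ℕ} (hk : k ≠ 0)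
    {r : ℝ} (hr₀ : 0 < r) (hr : r < 1) (h : A ^ k *ᵥ 1 ≤ r • 1) :
    ∃ (v : ι → ℝ) (a : ℝ), (∀ i, 0 < v i) ∧ a < 1 ∧ A *ᵥ v ≤ a • v := by
  set θ : ℝ := r⁻¹ ^ (k : ℝ)⁻¹
  have hθ : 1 < θ := Real.one_lt_rpow (one_lt_inv₀ hr₀ |>.2 hr) (by positivity)
  have hθk : θ ^ k = r⁻¹ := by
    rw [← Real.rpow_natCast, ← Real.rpow_mul (by positivity), 
      inv_mul_cancel₀ (by exact_mod_cast hk), Real.rpow_one]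
  set v := ∑ m ∈ range k, θ ^ m • (A ^ m *ᵥ 1)
  have hterm_nonneg : ∀ m, 0 ≤ θ ^ m • (A ^ m *ᵥ 1) := fun m =>
    smul_nonneg (by positivity) (pow_mulVec_nonneg hA zero_le_one m)
  have hv : 1 ≤ v := by
    simpa using
      Finset.single_le_sum (fun m _ => hterm_nonneg m) (mem_range.2 (Nat.pos_of_ne_zero hk))
  have hθAv : θ • (A *ᵥ v) = v + θ ^ k • (A ^ k *ᵥ 1) - 1 := by
    have hsplit := Finset.sum_range_succ' (fun m => θ ^ m • (A ^ m *ᵥ 1)) k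
    rw [Finset.sum_range_succ, pow_zero, pow_zero, one_smul, Matrix.one_mulVec] at hsplit
    rw [eq_sub_iff_add_eq, hsplit]
    simp only [v, mulVec_sum, mulVec_smul, mulVec_mulVec, smul_sum, smul_smul, ← pow_succ']
  have htail : θ ^ k • (A ^ k *ᵥ 1) ≤ 1 := by
    calc θ ^ k • (A ^ k *ᵥ 1) ≤ θ ^ k • (r • 1) := smul_le_smul_of_nonneg_left h (by positivity)
      _ = 1 := by rw [smul_smul, hθk, inv_mul_cancel₀ hr₀.ne', one_smul]
  refine ⟨v, θ⁻¹, fun i => one_pos.trans_le (hv i), inv_lt_one_of_one_lt₀ hθ, ?_⟩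
  calc A *ᵥ v = θ⁻¹ • θ • (A *ᵥ v) := by rw [inv_smul_smul₀ (by positivity)]
    _ ≤ θ⁻¹ • v := smul_le_smul_of_nonneg_left
      (by rwa [hθAv, sub_le_iff_le_add, add_le_add_iff_left]) (by positivity)

lemma exists_pos_mulVec_le_smul_of_tendsto_pow_mulVec (hA : ∀ i j, 0 ≤ A i j)
    (h : Tendsto (fun k => A ^ k *ᵥ 1) atTop (𝓝 0)) :
    ∃ (v : ι → ℝ) (a : ℝ), (∀ i, 0 < v i) ∧ a < 1 ∧ A *ᵥ v ≤ a • v := by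
  have hsmall : ∀ᶠ k in atTop, A ^ k *ᵥ 1 ≤ (2⁻¹ : ℝ) • 1 := by
    refine eventually_all.2 fun i => ?_
    simpa using
      (tendsto_pi_nhds.1 h i).eventually (eventually_le_nhds (by norm_num : (0 : ℝ) < 2⁻¹))
  obtain ⟨k, hk, hk0⟩ := (hsmall.and (eventually_ne_atTop 0)).exists
  exact exists_pos_mulVec_le_smul_of_pow_mulVec_le hA hk0 (by norm_num) (by norm_num) hk

end Matrix

namespace RoundRobin

def update (n : ℕ) [NeZero n] (j : ℕ) : Fin n := Fin.ofNat n (j - 1)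

variable {n : ℕ}

-- The number of updates of `γ` completed before time `t` when the components are updated in the
-- order `update n 1 = 0, 1, …, n - 1, 0, 1, …`.
def count (γ : Fin n) (t : ℕ) : ℕ := (t + n - 2 - γ) / n

lemma count_one (γ : Fin n) : count γ 1 = 0 :=
  Nat.div_eq_of_lt (by omega)

lemma count_sub_mul (γ : Fin n) {t d : ℕ} (h : n * d < t) :
    count γ (t - n * d) = count γ t - d := by
  rw [count, count, ← Nat.sub_mul_div, show t - n * d + n - 2 - γ = t + n - 2 - γ - n * d by omega]

variable [NeZero n]

lemma count_mul_add (r : ℕ) {i : ℕ} (hi : i < n) (γ : Fin n) :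
    count γ (r * n + i + 1) = r + if (γ : ℕ) < i then 1 else 0 := by
  have hγ := γ.isLt
  have hsplit : r * n + i + 1 + n - 2 - γ = (i + n - 1 - γ) + r * n := by omega
  rw [count, hsplit, Nat.add_mul_div_right _ _ (NeZero.pos n), add_comm]
  congr 1
  split_ifs with h
  · exact Nat.div_eq_of_lt_le (by omega) (by omega)
  · exact Nat.div_eq_of_lt (by omega)

lemma update_mul_add (r : ℕ) {i : ℕ} (hi : i < n) : (update n (r * n + i + 1) : ℕ) = i := by
  simp [update, Nat.mul_add_mod_self_right, Nat.mod_eq_of_lt hi]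

variable (n) in
lemma exists_eq_mul_add {j : ℕ} (hj : 1 ≤ j) : ∃ r i, i < n ∧ j = r * n + i + 1 :=
  ⟨(j - 1) / n, (j - 1) % n, Nat.mod_lt _ (NeZero.pos n), by
    have := Nat.div_add_mod' (j - 1) n; omega⟩

lemma count_succ {j : ℕ} (hj : 1 ≤ j) (γ : Fin n) :
    count γ (j + 1) = count γ j + if γ = update n j then 1 else 0 := by
  obtain ⟨r, i, hi, rfl⟩ := exists_eq_mul_add n hj
  have hγ := γ.isLt
  simp only [Fin.ext_iff, update_mul_add r hi, count_mul_add r hi]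
  rcases Nat.lt_or_ge (i + 1) n with hi' | hi'
  · rw [show r * n + i + 1 + 1 = r * n + (i + 1) + 1 by ring, count_mul_add r hi']
    split_ifs <;> omega
  · rw [show r * n + i + 1 + 1 = (r + 1) * n + 0 + 1 by rw [add_mul]; omega,
      count_mul_add (r + 1) (i := 0) (by omega)]
    split_ifs <;> omega

lemma count_update_mul_lt {j : ℕ} (hj : 1 ≤ j) : count (update n j) j * n < j := by
  obtain ⟨r, i, hi, rfl⟩ := exists_eq_mul_add n hj
  rw [count_mul_add r hi, update_mul_add r hi]
  simp

lemma count_update_le {j : ℕ} (hj : 1 ≤ j) (γ : Fin n) :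
    count (update n j) j ≤ count γ j ∧ count γ j ≤ count (update n j) j + 1 := by
  obtain ⟨r, i, hi, rfl⟩ := exists_eq_mul_add n hj
  rw [count_mul_add r hi, count_mul_add r hi, update_mul_add r hi]
  split_ifs <;> omega

lemma count_mul_add_self (r : ℕ) (γ : Fin n) : count γ (r * n + γ + 1) = r := by
  simp [count_mul_add r γ.isLt]

lemma exists_lt_update_eq (i : Fin n) (j : ℕ) : ∃ l, j < l ∧ update n l = i :=
  ⟨j * n + i + 1, by nlinarith [NeZero.pos n], Fin.ext (update_mul_add j i.isLt)⟩

-- Going back `d` whole sweeps lowers every `count` by `d`; the clipping at `j - 1` only takes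
-- effect when the requested value is the initial one.
def shift (sel : ℕ → Fin n → Fin n → ℕ) (γ : Fin n) (j : ℕ) : ℕ :=
  min (j - 1) (n * (count γ j - sel (count (update n j) j) (update n j) γ))

def trajectory (w : ℕ → Fin n → ℝ) (t : ℕ) (γ : Fin n) : ℝ := w (count γ t) γ

variable {sel : ℕ → Fin n → Fin n → ℕ}

lemma trajectory_sub_shift (w : ℕ → Fin n → ℝ) (hsel : ∀ r i γ, sel r i γ ≤ r) {j : ℕ}
    (hj : 1 ≤ j) (γ : Fin n) :
    trajectory w (j - shift sel γ j) γ = w (sel (count (update n j) j) (update n j) γ) γ := by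
  set r := count (update n j) j
  have hσ := hsel r (update n j) γ
  have hr := count_update_le hj γ
  have hrj : r * n < j := count_update_mul_lt hj
  unfold trajectory shift
  congr 1
  rcases le_or_gt (n * (count γ j - sel r (update n j) γ)) (j - 1) with hd | hd
  · rw [min_eq_right hd, count_sub_mul γ (by omega)]
    omega
  · rw [min_eq_left hd.le, show j - (j - 1) = 1 by omega, count_one]
    by_contra hσ0
    have : n * (count γ j - sel r (update n j) γ) ≤ r * n := by
      rw [mul_comm]; exact Nat.mul_le_mul_right n (by omega)
    omega

lemma shift_le {D : ℕ} (hlag : ∀ r i γ, r ≤ sel r i γ + D) {j : ℕ} (hj : 1 ≤ j) (γ : Fin n) :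
    shift sel γ j ≤ min (j - 1) (n * (D + 1)) := by
  have hr := count_update_le hj γ
  have := hlag (count (update n j) j) (update n j) γ
  exact min_le_min_left _ (Nat.mul_le_mul_left n (by omega))

theorem isChaoticRelaxation_trajectory (B : Matrix (Fin n) (Fin n) ℝ) (c : Fin n → ℝ)
    (w : ℕ → Fin n → ℝ) (D : ℕ) (hsel : ∀ r i γ, sel r i γ ≤ r)
    (hlag : ∀ r i γ, r ≤ sel r i γ + D)
    (hw : ∀ r i, w (r + 1) i = ∑ γ, B i γ * w (sel r i γ) γ + c i) :
    IsChaoticRelaxation B c (trajectory w) (shift sel) (update n) := by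
  refine ⟨fun j hj i => ⟨fun hi => ?_, fun hi => ?_⟩,
    ⟨n * (D + 1), fun γ j hj => shift_le hlag hj γ⟩, fun i j _ => exists_lt_update_eq i j⟩
  · simp only [trajectory, count_succ hj, if_neg hi, add_zero]
  · subst hi
    simp only [trajectory_sub_shift w hsel hj]
    rw [trajectory, count_succ hj, if_pos rfl, hw]

lemma tendsto_of_tendsto_trajectory {w : ℕ → Fin n → ℝ} {xs : Fin n → ℝ}
    (h : Tendsto (trajectory w) atTop (𝓝 xs)) : Tendsto w atTop (𝓝 xs) := by
  refine tendsto_pi_nhds.2 fun γ => ?_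
  have hsub : Tendsto (fun r => r * n + γ + 1) atTop atTop :=
    tendsto_atTop_mono (fun r => show r ≤ _ by nlinarith [NeZero.pos n]) tendsto_id
  simpa [Function.comp_def, trajectory, count_mul_add_self] using (tendsto_pi_nhds.1 h γ).comp hsub

end RoundRobin

namespace DivergentRelaxation

variable {ι : Type*} (B : Matrix ι ι ℝ)

-- For `r ≥ 1` this is `2k` or `2k + 1` with `k = (r - 1) / 2`, chosen so that `B i γ` times the
-- `spread` term gets the sign `(-1) ^ (r + 1)`.
noncomputable def delayIndex (r : ℕ) (i γ : ι) : ℕ :=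
  if r = 0 then 0 else 2 * ((r - 1) / 2) + (r + if 0 ≤ B i γ then 1 else 0) % 2

lemma delayIndex_le (r : ℕ) (i γ : ι) : delayIndex B r i γ ≤ r := by
  unfold delayIndex; split_ifs <;> omega

lemma le_delayIndex_add_two (r : ℕ) (i γ : ι) : r ≤ delayIndex B r i γ + 2 := by
  unfold delayIndex; split_ifs <;> omega

variable [Fintype ι]

-- Chosen so that one sweep from `oscillating B 0 = 1` gives `oscillating B 1 = -1`.
def rhs : ι → ℝ := -(B *ᵥ 1) - 1

def center (k : ℕ) : ι → ℝ := (fun y => B *ᵥ y + rhs B)^[k] 0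

lemma center_succ (k : ℕ) : center B (k + 1) = B *ᵥ center B k + rhs B :=
  Function.iterate_succ_apply' _ _ _

variable [DecidableEq ι]

def spread (k : ℕ) : ι → ℝ := B.map abs ^ k *ᵥ 1

def oscillating (r : ℕ) : ι → ℝ := center B (r / 2) + (-1 : ℝ) ^ r • spread B (r / 2)

lemma spread_succ (k : ℕ) : spread B (k + 1) = B.map abs *ᵥ spread B k := by
  rw [spread, spread, pow_succ', mulVec_mulVec]

lemma mul_oscillating_delayIndex (r : ℕ) (i γ : ι) :
    B i γ * oscillating B (delayIndex B (r + 1) i γ) γ =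
      B i γ * center B (r / 2) γ + (-1) ^ r * (|B i γ| * spread B (r / 2) γ) := by
  have hdiv : delayIndex B (r + 1) i γ / 2 = r / 2 := by
    by_cases hB : 0 ≤ B i γ <;> simp [delayIndex, hB] <;> omega
  have hmod : delayIndex B (r + 1) i γ % 2 = (r + 1 + if 0 ≤ B i γ then 1 else 0) % 2 := by
    by_cases hB : 0 ≤ B i γ <;> simp [delayIndex, hB]
  rw [oscillating, hdiv, Pi.add_apply, Pi.smul_apply, smul_eq_mul, neg_one_pow_eq_pow_mod_two, hmod,
    ← neg_one_pow_eq_pow_mod_two]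
  split_ifs with hB
  · rw [abs_of_nonneg hB]; ring
  · rw [abs_of_neg (not_le.1 hB)]; ring

lemma oscillating_succ (r : ℕ) (i : ι) :
    oscillating B (r + 1) i = ∑ γ, B i γ * oscillating B (delayIndex B r i γ) γ + rhs B i := by
  rcases r with _ | r
  · simp [oscillating, center, spread, delayIndex, rhs, mulVec, dotProduct]
    ring
  · simp only [mul_oscillating_delayIndex, sum_add_distrib, ← mul_sum]
    rw [oscillating, show (r + 1 + 1) / 2 = r / 2 + 1 by omega, center_succ, spread_succ]
    simp only [Pi.add_apply, Pi.smul_apply, smul_eq_mul, mulVec, dotProduct, map_apply]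
    ring

lemma oscillating_two_mul_sub (k : ℕ) :
    oscillating B (2 * k) - oscillating B (2 * k + 1) = (2 : ℝ) • spread B k := by
  simp only [oscillating, show (2 * k + 1) / 2 = k by omega, show 2 * k / 2 = k by omega, pow_succ,
    pow_mul, mul_neg_one, neg_smul]
  module

lemma tendsto_spread_of_tendsto_oscillating {xs : ι → ℝ}
    (h : Tendsto (oscillating B) atTop (𝓝 xs)) : Tendsto (spread B) atTop (𝓝 0) := by
  have heven : Tendsto (fun k : ℕ => 2 * k) atTop atTop :=
    tendsto_atTop_mono (fun k => show k ≤ 2 * k by omega) tendsto_id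
  have hodd : Tendsto (fun k : ℕ => 2 * k + 1) atTop atTop :=
    tendsto_atTop_mono (fun k => show k ≤ 2 * k + 1 by omega) tendsto_id
  have hlim := ((h.comp heven).sub (h.comp hodd)).const_smul (2⁻¹ : ℝ)
  rw [sub_self, smul_zero] at hlim
  refine hlim.congr fun k => ?_
  simp [oscillating_two_mul_sub, smul_smul]

end DivergentRelaxation

open RoundRobin DivergentRelaxation

theorem exists_divergent_chaotic_relaxation_general
    {n : ℕ} (B : Matrix (Fin n) (Fin n) ℝ)
    (hno : ¬ ∃ (v : Fin n → ℝ) (a : ℝ), (∀ i, 0 < v i) ∧ a < 1 ∧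
        ∀ i, (∑ j : Fin n, |B i j| * v j) ≤ a * v i) :
    ∃ (c : Fin n → ℝ) (x : ℕ → Fin n → ℝ) (s : Fin n → ℕ → ℕ) (u : ℕ → Fin n),
      IsChaoticRelaxation B c x s u ∧
      ¬ ∃ xs : Fin n → ℝ, Tendsto x atTop (𝓝 xs) := by
  have : NeZero n := ⟨by rintro rfl; exact hno ⟨0, 0, finZeroElim, zero_lt_one, finZeroElim⟩⟩
  refine ⟨rhs B, trajectory (oscillating B), shift (delayIndex B), update n,
    isChaoticRelaxation_trajectory B _ _ 2 (delayIndex_le B) (le_delayIndex_add_two B)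
      (oscillating_succ B), ?_⟩
  rintro ⟨xs, hx⟩
  have hspread := tendsto_spread_of_tendsto_oscillating B (tendsto_of_tendsto_trajectory hx)
  obtain ⟨v, a, hv, ha, hAv⟩ :=
    exists_pos_mulVec_le_smul_of_tendsto_pow_mulVec (fun i j => abs_nonneg (B i j)) hspread
  exact hno ⟨v, a, hv, ha, fun i => hAv i⟩

/-- If no `v > 0` and `α < 1` satisfy `|B| v ≤ α v` componentwise, then there exist a
right-hand side `c`, an initial vector (the sequence itself), admissible shift functions
and an admissible update function such that the resulting chaotic relaxation for `(B, c)`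
does not converge. -/
theorem exists_divergent_chaotic_relaxation
    {n : ℕ} (hn : 1 ≤ n) (B : Matrix (Fin n) (Fin n) ℝ)
    (hno : ¬ ∃ (v : Fin n → ℝ) (a : ℝ), (∀ i, 0 < v i) ∧ a < 1 ∧
        ∀ i, (∑ j : Fin n, |B i j| * v j) ≤ a * v i) :
    ∃ (c : Fin n → ℝ) (x : ℕ → Fin n → ℝ) (s : Fin n → ℕ → ℕ) (u : ℕ → Fin n),
      IsChaoticRelaxation B c x s u ∧
      ¬ ∃ xs : Fin n → ℝ, Tendsto x atTop (𝓝 xs) :=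
  exists_divergent_chaotic_relaxation_general B hno
end

section
/- L is invertible, and every block-asynchronous iteration (x^j) for the system L x = r reaches the exact solution in finitely many steps: there exists J ∈ ℕ such that x^j = L⁻¹ r for all j ≥ J. -/
/-! Forward substitution: once the blocks `1, …, i - 1` of the iterates agree with the solution
from some time on, the bounded delays make every later update of block `i` read only exact
values, so that update returns the exact block `i`. Fairness guarantees such an update, and
afterwards block `i` is only ever overwritten by exact values. Induction on `i` finishes the
convergence proof. The same forward substitution shows that `L *ᵥ y` determines `y`, which
gives the invertibility of `L`. -/

open Filter Topology

/-- The `(i,j)`-th `b × b` block of a matrix indexed by `Fin N × Fin b`. -/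
def blockOf {N b : ℕ} (M : Matrix (Fin N × Fin b) (Fin N × Fin b) ℝ) (i j : Fin N) :
    Matrix (Fin b) (Fin b) ℝ :=
  Matrix.of fun k l => M (i, k) (j, l)

/-- The strictly lower block triangular part `L̃` of a matrix (blocks of size `b × b`). -/
def strictBlockLowerPart {N b : ℕ} (M : Matrix (Fin N × Fin b) (Fin N × Fin b) ℝ) :
    Matrix (Fin N × Fin b) (Fin N × Fin b) ℝ :=
  Matrix.of fun p q => if q.1 < p.1 then M p q else 0

/-- A block-asynchronous iteration for the lower block triangular system `L x = r`:
at each step `j ≥ 1` the block `u j` is updated via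
`x^{j+1}_i = L_{ii}⁻¹ (r_i - (L̃ z)_i)` where `z_α = x^{j - s_α(j)}_α`, with bounded
shifts and a fair update function. -/
def IsBlockAsyncTriIteration {N b : ℕ}
    (L : Matrix (Fin N × Fin b) (Fin N × Fin b) ℝ) (r : (Fin N × Fin b) → ℝ)
    (x : ℕ → (Fin N × Fin b) → ℝ) (s : (Fin N × Fin b) → ℕ → ℕ)
    (u : ℕ → Fin N) : Prop :=
  (∀ j : ℕ, 1 ≤ j → ∀ i : Fin N,
      (i ≠ u j → ∀ k : Fin b, x (j + 1) (i, k) = x j (i, k)) ∧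
      (i = u j → ∀ k : Fin b,
        x (j + 1) (i, k) =
          (blockOf L i i)⁻¹.mulVec
            (fun k' => r (i, k') -
              (strictBlockLowerPart L).mulVec (fun q => x (j - s q j) q) (i, k')) k)) ∧
  (∃ shat : ℕ, ∀ (q : Fin N × Fin b) (j : ℕ), 1 ≤ j → s q j ≤ min (j - 1) shat) ∧
  (∀ (i : Fin N) (j : ℕ), 1 ≤ j → ∃ l : ℕ, j < l ∧ u l = i)

open Matrix

section ForwardSubstitution

variable {N b : ℕ} (L : Matrix (Fin N × Fin b) (Fin N × Fin b) ℝ) (r : Fin N × Fin b → ℝ)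

noncomputable def blockUpdate (z : Fin N × Fin b → ℝ) (i : Fin N) : Fin b → ℝ :=
  (blockOf L i i)⁻¹ *ᵥ fun k => r (i, k) - (strictBlockLowerPart L *ᵥ z) (i, k)

lemma blockUpdate_congr {z w : Fin N × Fin b → ℝ} {i : Fin N}
    (h : ∀ q : Fin N × Fin b, q.1 < i → z q = w q) :
    blockUpdate L r z i = blockUpdate L r w i := by
  have hstrict : ∀ k, (strictBlockLowerPart L *ᵥ z) (i, k) = (strictBlockLowerPart L *ᵥ w) (i, k) :=
    fun k => Finset.sum_congr rfl fun q _ => by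
      by_cases hq : q.1 < i <;> simp [strictBlockLowerPart, hq, h q]
  simp only [blockUpdate, hstrict]

lemma mulVec_apply_eq_blockOf_mulVec_add_strictBlockLowerPart
    (hlow : ∀ p q : Fin N × Fin b, p.1 < q.1 → L p q = 0)
    (z : Fin N × Fin b → ℝ) (i : Fin N) (k : Fin b) :
    (L *ᵥ z) (i, k) =
      (blockOf L i i *ᵥ fun l => z (i, l)) k + (strictBlockLowerPart L *ᵥ z) (i, k) := by
  have hdiagBlock : (blockOf L i i *ᵥ fun l => z (i, l)) k =
      ∑ q : Fin N × Fin b, if q.1 = i then L (i, k) q * z q else 0 := by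
    rw [Fintype.sum_prod_type, Finset.sum_eq_single i (fun j _ hj => by simp [hj]) (by simp)]
    simp [mulVec, dotProduct, blockOf]
  rw [hdiagBlock]
  simp only [mulVec, dotProduct, strictBlockLowerPart, of_apply, ← Finset.sum_add_distrib]
  refine Finset.sum_congr rfl fun q _ => ?_
  rcases lt_trichotomy q.1 i with h | h | h
  · simp [h, h.ne]
  · simp [h]
  · simp [hlow (i, k) q h, h.ne', h.not_gt]

variable {L r}

lemma blockUpdate_eq_of_mulVec_eq (hlow : ∀ p q : Fin N × Fin b, p.1 < q.1 → L p q = 0)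
    {i : Fin N} (hdiag : IsUnit (blockOf L i i)) {y : Fin N × Fin b → ℝ} (hy : L *ᵥ y = r) :
    blockUpdate L r y i = fun k => y (i, k) := by
  have hresidual : (fun k => r (i, k) - (strictBlockLowerPart L *ᵥ y) (i, k)) =
      blockOf L i i *ᵥ fun l => y (i, l) := by
    funext k
    rw [← hy, mulVec_apply_eq_blockOf_mulVec_add_strictBlockLowerPart L hlow, add_sub_cancel_right]
  rw [blockUpdate, hresidual, mulVec_mulVec,
    nonsing_inv_mul _ ((isUnit_iff_isUnit_det _).1 hdiag), one_mulVec]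

lemma eq_of_forall_blockUpdate_eq {y y' : Fin N × Fin b → ℝ}
    (hy : ∀ i, blockUpdate L r y i = fun k => y (i, k))
    (hy' : ∀ i, blockUpdate L r y' i = fun k => y' (i, k)) : y = y' := by
  have hblock : ∀ i k, y (i, k) = y' (i, k) := by
    intro i
    induction i using WellFoundedLT.induction with
    | ind i ih =>
      rw [← funext_iff, ← hy, ← hy', blockUpdate_congr L r fun q hq => ih q.1 hq q.2]
  exact funext fun q => hblock q.1 q.2

lemma isUnit_of_blockLowerTriangular (hlow : ∀ p q : Fin N × Fin b, p.1 < q.1 → L p q = 0)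
    (hdiag : ∀ i, IsUnit (blockOf L i i)) : IsUnit L :=
  mulVec_injective_iff_isUnit.1 fun y _ h =>
    eq_of_forall_blockUpdate_eq (r := L *ᵥ y) (fun i => blockUpdate_eq_of_mulVec_eq hlow (hdiag i) rfl)
      (fun i => blockUpdate_eq_of_mulVec_eq hlow (hdiag i) h.symm)

end ForwardSubstitution

lemma Nat.eventually_of_frequently_of_succ {p q : ℕ → Prop} (hp : ∃ᶠ j in atTop, p j)
    (hpq : ∀ᶠ j in atTop, p j → q (j + 1)) (hq : ∀ᶠ j in atTop, ¬ p j → q j → q (j + 1)) :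
    ∀ᶠ j in atTop, q j := by
  obtain ⟨T, hT⟩ := eventually_atTop.1 (hpq.and hq)
  obtain ⟨l, hTl, hl⟩ := frequently_atTop.1 hp T
  refine eventually_atTop.2 ⟨l + 1, fun j hj => ?_⟩
  induction j, hj using Nat.le_induction with
  | base => exact (hT l hTl).1 hl
  | succ j hj ih =>
    by_cases hpj : p j
    · exact (hT j (by omega)).1 hpj
    · exact (hT j (by omega)).2 hpj ih

namespace IsBlockAsyncTriIteration

variable {N b : ℕ} {L : Matrix (Fin N × Fin b) (Fin N × Fin b) ℝ} {r : Fin N × Fin b → ℝ}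
  {x : ℕ → Fin N × Fin b → ℝ} {s : Fin N × Fin b → ℕ → ℕ} {u : ℕ → Fin N}
  (hx : IsBlockAsyncTriIteration L r x s u)
include hx

lemma frequently_update_eq (i : Fin N) : ∃ᶠ j in atTop, u j = i :=
  frequently_atTop.2 fun a => by
    obtain ⟨l, hl, hul⟩ := hx.2.2 i (max a 1) (le_max_right a 1)
    exact ⟨l, by omega, hul⟩

lemma eventually_delayed_eq {y : Fin N × Fin b → ℝ} {q : Fin N × Fin b}
    (h : ∀ᶠ j in atTop, x j q = y q) : ∀ᶠ j in atTop, x (j - s q j) q = y q := by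
  obtain ⟨shat, hs⟩ := hx.2.1
  obtain ⟨T, hT⟩ := eventually_atTop.1 h
  filter_upwards [eventually_ge_atTop (T + shat + 1)] with j hj
  have : s q j ≤ shat := (hs q j (by omega)).trans (min_le_right _ _)
  exact hT _ (by omega)

lemma eventually_block_eq {y : Fin N × Fin b → ℝ}
    (hy : ∀ i, blockUpdate L r y i = fun k => y (i, k)) {i : Fin N}
    (h : ∀ q : Fin N × Fin b, q.1 < i → ∀ᶠ j in atTop, x j q = y q) :
    ∀ᶠ j in atTop, ∀ k, x j (i, k) = y (i, k) := by
  have hlower : ∀ᶠ j in atTop, ∀ q : {q : Fin N × Fin b // q.1 < i}, x (j - s q j) q = y q :=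
    eventually_all.2 fun q => hx.eventually_delayed_eq (h q q.2)
  refine Nat.eventually_of_frequently_of_succ (hx.frequently_update_eq i) ?_ ?_
  · filter_upwards [hlower, eventually_ge_atTop 1] with j hj hj1 hu k
    rw [(hx.1 j hj1 i).2 hu.symm k]
    change blockUpdate L r (fun q => x (j - s q j) q) i k = y (i, k)
    rw [blockUpdate_congr L r fun q hq => hj ⟨q, hq⟩, hy i]
  · filter_upwards [eventually_ge_atTop 1] with j hj1 hu hxj k
    rw [(hx.1 j hj1 i).1 (Ne.symm hu) k, hxj k]

lemma eventually_eq {y : Fin N × Fin b → ℝ} (hy : ∀ i, blockUpdate L r y i = fun k => y (i, k)) :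
    ∀ᶠ j in atTop, x j = y := by
  have hblock : ∀ i, ∀ᶠ j in atTop, ∀ k, x j (i, k) = y (i, k) := by
    intro i
    induction i using WellFoundedLT.induction with
    | ind i ih => exact hx.eventually_block_eq hy fun q hq => (ih q.1 hq).mono fun j hj => hj q.2
  filter_upwards [eventually_all.2 hblock] with j hj
  exact funext fun q => hj q.1 q.2

end IsBlockAsyncTriIteration

theorem blockAsync_triangular_converges_finitely_general
    {N b : ℕ}
    (L : Matrix (Fin N × Fin b) (Fin N × Fin b) ℝ)
    (hlow : ∀ p q : Fin N × Fin b, p.1 < q.1 → L p q = 0)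
    (hdiag : ∀ i : Fin N, IsUnit (blockOf L i i))
    (r : (Fin N × Fin b) → ℝ) :
    IsUnit L ∧
    ∀ (x : ℕ → (Fin N × Fin b) → ℝ) (s : (Fin N × Fin b) → ℕ → ℕ) (u : ℕ → Fin N),
      IsBlockAsyncTriIteration L r x s u →
      ∃ J : ℕ, ∀ j : ℕ, J ≤ j → x j = L⁻¹.mulVec r := by
  have hL : IsUnit L := isUnit_of_blockLowerTriangular hlow hdiag
  have hsol : L *ᵥ (L⁻¹ *ᵥ r) = r := by
    rw [mulVec_mulVec, mul_nonsing_inv _ ((isUnit_iff_isUnit_det L).1 hL), one_mulVec]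
  refine ⟨hL, fun x s u hx => eventually_atTop.1 (hx.eventually_eq fun i => ?_)⟩
  exact blockUpdate_eq_of_mulVec_eq hlow (hdiag i) hsol

/-- `L` is invertible, and every block-asynchronous iteration for `L x = r` reaches the
exact solution `L⁻¹ r` in finitely many steps. -/
theorem blockAsync_triangular_converges_finitely
    {N b : ℕ} (hb : 1 ≤ b) (hN : 1 ≤ N)
    (L : Matrix (Fin N × Fin b) (Fin N × Fin b) ℝ)
    (hlow : ∀ p q : Fin N × Fin b, p.1 < q.1 → L p q = 0)
    (hdiag : ∀ i : Fin N, IsUnit (blockOf L i i))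
    (r : (Fin N × Fin b) → ℝ) :
    IsUnit L ∧
    ∀ (x : ℕ → (Fin N × Fin b) → ℝ) (s : (Fin N × Fin b) → ℕ → ℕ) (u : ℕ → Fin N),
      IsBlockAsyncTriIteration L r x s u →
      ∃ J : ℕ, ∀ j : ℕ, J ≤ j → x j = L⁻¹.mulVec r :=
  blockAsync_triangular_converges_finitely_general L hlow hdiag r
end

section
/- With the row-major block ordering and the corresponding ordering of the m scalar unknowns, the map h has strictly lower triangular structure: for every x ∈ D_B, every (i,j), (p,q) ∈ S_B with (p,q) not strictly preceding (i,j) (i.e., (i,j) ≺ (p,q) or (i,j) = (p,q)), and all entry positions, the partial derivative of any entry of H_{ij}(x) with respect to any entry of X_{pq} is zero; equivalently, the Jacobian matrix h′(x) ∈ ℝ^{m×m} is strictly lower triangular for every x ∈ D_B. -/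
open Filter Topology

/-- The state space of block unknowns: one `b × b` block for each index pair in `S`. -/
abbrev BlockVec (b N : ℕ) (S : Finset (Fin N × Fin N)) : Type :=
  {p : Fin N × Fin N // p ∈ S} → Fin b → Fin b → ℝ

/-- The block `X_{ij}` of the family `x`, with the convention `X_{ij} = 0` for
`(i,j) ∉ S`. -/
def Xf {b N : ℕ} (S : Finset (Fin N × Fin N)) (x : BlockVec b N S) (i j : Fin N) :
    Matrix (Fin b) (Fin b) ℝ :=
  if h : (i, j) ∈ S then Matrix.of (x ⟨(i, j), h⟩) else 0

/-- The block `H_{ij}(x)` of the block-ILU fixed point map: for `i > j` it is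
`(A_{ij} - ∑_{k<j} X_{ik} X_{kj}) X_{jj}⁻¹`, and for `i ≤ j` it is
`A_{ij} - ∑_{k<i} X_{ik} X_{kj}`. -/
noncomputable def Hmap {b N : ℕ} (S : Finset (Fin N × Fin N))
    (A : Fin N → Fin N → Matrix (Fin b) (Fin b) ℝ) (x : BlockVec b N S) (i j : Fin N) :
    Matrix (Fin b) (Fin b) ℝ :=
  if j < i then
    (A i j - ∑ k ∈ Finset.univ.filter (fun k : Fin N => k < j),
        Xf S x i k * Xf S x k j) * (Xf S x j j)⁻¹
  else
    A i j - ∑ k ∈ Finset.univ.filter (fun k : Fin N => k < i), Xf S x i k * Xf S x k j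

/-- The block-ILU fixed point map `h`. -/
noncomputable def hFun {b N : ℕ} (S : Finset (Fin N × Fin N))
    (A : Fin N → Fin N → Matrix (Fin b) (Fin b) ℝ) :
    BlockVec b N S → BlockVec b N S :=
  fun x p k l => Hmap S A x p.1.1 p.1.2 k l

/-- The domain of definition `D_B`: all diagonal blocks invertible. -/
def DB (b N : ℕ) (S : Finset (Fin N × Fin N)) : Set (BlockVec b N S) :=
  {x | ∀ j : Fin N, IsUnit (Xf S x j j)}

/-!
Each block `H_{ij}(x)` is built only from blocks `X_{pq}` with `(p,q)` strictly before `(i,j)` in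
row-major order. Hence `x ↦ H_{ij}(x)` is constant along every coordinate direction of a block
`X_{pq}` with `(i,j) ⪯ (p,q)`, and a function constant along a line has zero derivative in the
direction of that line (when it is not differentiable, `fderiv` is `0` anyway).
-/

theorem fderiv_apply_eq_zero_of_forall_add_smul_eq {𝕜 E F : Type*} [NontriviallyNormedField 𝕜]
    [NormedAddCommGroup E] [NormedSpace 𝕜 E] [NormedAddCommGroup F] [NormedSpace 𝕜 F]
    {f : E → F} {x v : E} (h : ∀ t : 𝕜, f (x + t • v) = f x) :
    fderiv 𝕜 f x v = 0 := by
  by_cases hf : DifferentiableAt 𝕜 f x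
  · rw [← hf.lineDeriv_eq_fderiv, lineDeriv, funext h, deriv_const]
  · rw [fderiv_zero_of_not_differentiableAt hf]
    rfl

section BlockILU

variable {b N : ℕ} {S : Finset (Fin N × Fin N)}

theorem Xf_add_single (x : BlockVec b N S) (pq : {p : Fin N × Fin N // p ∈ S})
    (w : Fin b → Fin b → ℝ) {i j : Fin N} (h : (i, j) ≠ pq.1) :
    Xf S (x + Pi.single pq w) i j = Xf S x i j := by
  unfold Xf
  split_ifs with hm
  · rw [Pi.add_apply, Pi.single_eq_of_ne (fun hc => h (congrArg Subtype.val hc)), add_zero]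
  · rfl

theorem Hmap_congr (A : Fin N → Fin N → Matrix (Fin b) (Fin b) ℝ) {x y : BlockVec b N S}
    {i j : Fin N} (h : ∀ p q, toLex (p, q) < toLex (i, j) → Xf S x p q = Xf S y p q) :
    Hmap S A x i j = Hmap S A y i j := by
  simp only [Prod.Lex.toLex_lt_toLex] at h
  unfold Hmap
  split_ifs with hji
  · have hsum : ∀ k ∈ Finset.univ.filter (fun k : Fin N => k < j),
        Xf S x i k * Xf S x k j = Xf S y i k * Xf S y k j := by
      intro k hk
      rw [Finset.mem_filter] at hk
      rw [h i k (Or.inr ⟨rfl, by omega⟩), h k j (Or.inl (by omega))]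
    rw [Finset.sum_congr rfl hsum, h j j (Or.inl hji)]
  · have hsum : ∀ k ∈ Finset.univ.filter (fun k : Fin N => k < i),
        Xf S x i k * Xf S x k j = Xf S y i k * Xf S y k j := by
      intro k hk
      rw [Finset.mem_filter] at hk
      rw [h i k (Or.inr ⟨rfl, by omega⟩), h k j (Or.inl hk.2)]
    rw [Finset.sum_congr rfl hsum]

theorem Hmap_add_single (A : Fin N → Fin N → Matrix (Fin b) (Fin b) ℝ) (x : BlockVec b N S)
    (pq : {p : Fin N × Fin N // p ∈ S}) (w : Fin b → Fin b → ℝ) {i j : Fin N}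
    (hle : ¬ toLex pq.1 < toLex (i, j)) :
    Hmap S A (x + Pi.single pq w) i j = Hmap S A x i j :=
  Hmap_congr A fun _ _ hpq =>
    Xf_add_single x pq w fun hc => hle (hc ▸ hpq)

end BlockILU

theorem hFun_jacobian_strictly_lower_triangular_general
    {b N : ℕ} (S : Finset (Fin N × Fin N))
    (A : Fin N → Fin N → Matrix (Fin b) (Fin b) ℝ) :
    ∀ x ∈ DB b N S, ∀ ij pq : {p : Fin N × Fin N // p ∈ S},
      ¬ (pq.1.1 < ij.1.1 ∨ (pq.1.1 = ij.1.1 ∧ pq.1.2 < ij.1.2)) →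
      ∀ k l k' l' : Fin b,
        fderiv ℝ (fun y : BlockVec b N S => hFun S A y ij k l) x
          (Pi.single pq (Pi.single k' (Pi.single l' (1 : ℝ)))) = 0 := by
  intro x _ ij pq hord k l k' l'
  rw [← Prod.Lex.toLex_lt_toLex] at hord
  refine fderiv_apply_eq_zero_of_forall_add_smul_eq fun t => ?_
  rw [← Pi.single_smul]
  exact congrFun (congrFun (Hmap_add_single A x pq _ hord) k) l

/-- With the row-major (block Gaussian elimination) ordering, `h` has strictly lower
triangular structure: at any `x ∈ D_B`, the partial derivative of any entry of
`H_{ij}(x)` with respect to any entry of a block `X_{pq}` that does not strictly precede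
`(i,j)` vanishes, i.e. the Jacobian `h'(x)` is strictly lower triangular. -/
theorem hFun_jacobian_strictly_lower_triangular
    {b N : ℕ} (hb : 1 ≤ b) (hN : 1 ≤ N) (S : Finset (Fin N × Fin N))
    (hS : ∀ j : Fin N, (j, j) ∈ S)
    (A : Fin N → Fin N → Matrix (Fin b) (Fin b) ℝ) :
    ∀ x ∈ DB b N S, ∀ ij pq : {p : Fin N × Fin N // p ∈ S},
      ¬ (pq.1.1 < ij.1.1 ∨ (pq.1.1 = ij.1.1 ∧ pq.1.2 < ij.1.2)) →
      ∀ k l k' l' : Fin b,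
        fderiv ℝ (fun y : BlockVec b N S => hFun S A y ij k l) x
          (Pi.single pq (Pi.single k' (Pi.single l' (1 : ℝ)))) = 0 :=
  hFun_jacobian_strictly_lower_triangular_general S A
end

section
/- If x* ∈ D_B is a fixed point of h (i.e., h(x*) = x*), then x* is a point of attraction of the synchronous fixed-point iteration x^{p+1} = h(x^p): there exists an open neighborhood U ⊆ D_B of x* such that for every x⁰ ∈ U, the iterates x^p are defined for all p (remain in D_B) and converge to x* as p → ∞. -/
/-!
The block `H_{ij}(x)` depends only on blocks that come strictly earlier in the order: row 0
of the upper part (`i ≤ j`), column 0 of the lower part (`i > j`), row 1 of the upper part,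
column 1 of the lower part, …  So if `x` agrees with the fixed point `x*` on the first `m`
groups of this order, `h(x)` agrees with it on the first `m + 1`, and the synchronous
iteration reaches `x*` within `2N` steps from any start. The attracting neighbourhood is the
set of starting points whose first `2N` iterates lie in `D_B`; it is open because `D_B` is
open and `h` is continuous on it.
-/

open Filter Topology

section FiniteTermination

variable {ι α : Type*}

def DependsOnLowerRank (f : (ι → α) → ι → α) (rank : ι → ℕ) : Prop :=
  ∀ x y i, (∀ j, rank j < rank i → x j = y j) → f x i = f y i

namespace DependsOnLowerRank

variable {f : (ι → α) → ι → α} {rank : ι → ℕ} {xstar : ι → α}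

theorem iterate_apply_eq (hf : DependsOnLowerRank f rank) (hfix : f xstar = xstar)
    (x : ι → α) (n : ℕ) : ∀ i, rank i < n → f^[n] x i = xstar i := by
  induction n with
  | zero => exact fun i hi => absurd hi (Nat.not_lt_zero _)
  | succ n ih =>
    intro i hi
    calc f^[n + 1] x i = f (f^[n] x) i := by rw [Function.iterate_succ_apply']
      _ = f xstar i := hf _ _ i fun j hj => ih j (by omega)
      _ = xstar i := by rw [hfix]

theorem iterate_eq (hf : DependsOnLowerRank f rank) (hfix : f xstar = xstar) {n : ℕ}
    (hn : ∀ i, rank i < n) (x : ι → α) : f^[n] x = xstar :=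
  funext fun i => hf.iterate_apply_eq hfix x n i (hn i)

end DependsOnLowerRank

end FiniteTermination

section Attraction

variable {X : Type*} [TopologicalSpace X] {f : X → X} {D : Set X}

theorem isOpen_setOf_forall_le_iterate_mem (hD : IsOpen D) (hf : ContinuousOn f D) (n : ℕ) :
    IsOpen {x | ∀ p ≤ n, f^[p] x ∈ D} := by
  induction n with
  | zero => simpa using hD
  | succ n ih =>
    have hsplit : {x | ∀ p ≤ n + 1, f^[p] x ∈ D} = D ∩ f ⁻¹' {x | ∀ p ≤ n, f^[p] x ∈ D} := by
      ext x
      simp only [Set.mem_ofPred_eq, Set.mem_inter_iff, Set.mem_preimage, ← Nat.lt_succ_iff,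
        Nat.forall_lt_succ_left (n := n + 1), Function.iterate_succ_apply,
        Function.iterate_zero_apply]
    rw [hsplit]
    exact hf.isOpen_inter_preimage hD ih

theorem exists_isOpen_forall_iterate_mem_tendsto_of_iterate_eq (hD : IsOpen D)
    (hf : ContinuousOn f D) {xstar : X} (hxstar : xstar ∈ D) {n : ℕ}
    (hn : ∀ x, f^[n] x = xstar) :
    ∃ U : Set X, IsOpen U ∧ xstar ∈ U ∧ U ⊆ D ∧
      ∀ x0 ∈ U, (∀ p, f^[p] x0 ∈ D) ∧ Tendsto (fun p => f^[p] x0) atTop (𝓝 xstar) := by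
  have hlate : ∀ x, ∀ p ≥ n, f^[p] x = xstar := fun x p hp => by
    rw [← Nat.add_sub_cancel' hp, Function.iterate_add_apply, hn]
  have hfixed : ∀ p, f^[p] xstar = xstar := fun p =>
    calc f^[p] xstar = f^[p] (f^[n] xstar) := by rw [hn]
      _ = f^[p + n] xstar := (Function.iterate_add_apply f p n xstar).symm
      _ = xstar := hlate _ _ (Nat.le_add_left n p)
  refine ⟨{x | ∀ p ≤ n, f^[p] x ∈ D}, isOpen_setOf_forall_le_iterate_mem hD hf n,
    fun p _ => (hfixed p).symm ▸ hxstar, fun x hx => hx 0 (Nat.zero_le n),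
    fun x0 hx0 => ⟨fun p => ?_, tendsto_atTop_of_eventually_const (hlate x0)⟩⟩
  rcases le_or_gt p n with hp | hp
  · exact hx0 p hp
  · exact (hlate x0 p hp.le).symm ▸ hxstar

end Attraction

section BlockILU

variable {b N : ℕ} (S : Finset (Fin N × Fin N)) (A : Fin N → Fin N → Matrix (Fin b) (Fin b) ℝ)

theorem continuous_Xf (i j : Fin N) : Continuous fun x : BlockVec b N S => Xf S x i j := by
  unfold Xf
  split
  · exact continuous_apply _
  · exact continuous_const

theorem isOpen_DB : IsOpen (DB b N S) := by
  have hDB : DB b N S = ⋂ j, (fun x : BlockVec b N S => (Xf S x j j).det) ⁻¹' {0}ᶜ := by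
    ext x
    simp [DB, Matrix.isUnit_iff_isUnit_det]
  rw [hDB]
  exact isOpen_iInter_of_finite fun j =>
    isOpen_compl_singleton.preimage (continuous_Xf S j j).matrix_det

theorem continuousOn_Xf_inv (j : Fin N) :
    ContinuousOn (fun x : BlockVec b N S => (Xf S x j j)⁻¹) (DB b N S) := fun x hx =>
  ContinuousAt.continuousWithinAt <| ContinuousAt.comp (g := Inv.inv)
    (continuousAt_matrix_inv _ <| by
      rw [Ring.inverse_eq_inv']
      exact continuousAt_inv₀ ((Matrix.isUnit_iff_isUnit_det _).1 (hx j)).ne_zero)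
    (continuous_Xf S j j).continuousAt

theorem continuousOn_Hmap (i j : Fin N) :
    ContinuousOn (fun x : BlockVec b N S => Hmap S A x i j) (DB b N S) := by
  have hres : ∀ m : Fin N, Continuous fun x : BlockVec b N S =>
      A i j - ∑ k ∈ Finset.univ.filter (· < m), Xf S x i k * Xf S x k j := fun m =>
    continuous_const.sub <| continuous_finsetSum _ fun k _ =>
      (continuous_Xf S i k).matrix_mul (continuous_Xf S k j)
  unfold Hmap
  split_ifs
  · exact (hres j).continuousOn.mul (continuousOn_Xf_inv S j)
  · exact (hres i).continuousOn

theorem continuousOn_hFun : ContinuousOn (hFun S A) (DB b N S) :=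
  continuousOn_pi.2 fun p => continuousOn_Hmap S A p.1.1 p.1.2

def blockRank (p : Fin N × Fin N) : ℕ :=
  if p.2 < p.1 then 2 * p.2 + 1 else 2 * p.1

theorem blockRank_lt (p : Fin N × Fin N) : blockRank p < 2 * N := by
  unfold blockRank
  split_ifs <;> omega

theorem blockRank_lt_of_lt_of_lt {i j k : Fin N} (hki : k < i) (hkj : k < j) :
    blockRank (i, k) < blockRank (i, j) ∧ blockRank (k, j) < blockRank (i, j) := by
  simp only [blockRank]
  split_ifs <;> omega

theorem blockRank_diag_lt {i j : Fin N} (hji : j < i) : blockRank (j, j) < blockRank (i, j) := by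
  simp only [blockRank]
  split_ifs <;> omega

variable {S}

theorem Hmap_eq_of_Xf_eq {x y : BlockVec b N S} {i j : Fin N}
    (hxy : ∀ i' j', blockRank (i', j') < blockRank (i, j) → Xf S x i' j' = Xf S y i' j') :
    Hmap S A x i j = Hmap S A y i j := by
  have hsum : ∀ m : Fin N, m ≤ i → m ≤ j →
      ∑ k ∈ Finset.univ.filter (· < m), Xf S x i k * Xf S x k j =
        ∑ k ∈ Finset.univ.filter (· < m), Xf S y i k * Xf S y k j := by
    intro m hmi hmj
    refine Finset.sum_congr rfl fun k hk => ?_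
    have hkm : k < m := (Finset.mem_filter.1 hk).2
    obtain ⟨hik, hkj⟩ := blockRank_lt_of_lt_of_lt (hkm.trans_le hmi) (hkm.trans_le hmj)
    rw [hxy i k hik, hxy k j hkj]
  unfold Hmap
  split_ifs with hji
  · rw [hsum j hji.le le_rfl, hxy j j (blockRank_diag_lt hji)]
  · rw [hsum i le_rfl (not_lt.1 hji)]

variable (S)

theorem dependsOnLowerRank_hFun :
    DependsOnLowerRank (hFun S A) fun q => blockRank q.1 := by
  intro x y p hxy
  refine Hmap_eq_of_Xf_eq A fun i' j' hlt => ?_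
  unfold Xf
  split_ifs with hmem
  · rw [hxy ⟨(i', j'), hmem⟩ hlt]
  · rfl

end BlockILU

theorem fixedPoint_attracts_synchronous_iteration_general
    {b N : ℕ} (S : Finset (Fin N × Fin N))
    (A : Fin N → Fin N → Matrix (Fin b) (Fin b) ℝ)
    (xstar : BlockVec b N S) (hxstar : xstar ∈ DB b N S)
    (hfix : hFun S A xstar = xstar) :
    ∃ U : Set (BlockVec b N S), IsOpen U ∧ xstar ∈ U ∧ U ⊆ DB b N S ∧
      ∀ x0 ∈ U,
        (∀ p : ℕ, (hFun S A)^[p] x0 ∈ DB b N S) ∧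
        Tendsto (fun p : ℕ => (hFun S A)^[p] x0) atTop (𝓝 xstar) :=
  exists_isOpen_forall_iterate_mem_tendsto_of_iterate_eq (isOpen_DB S) (continuousOn_hFun S A)
    hxstar ((dependsOnLowerRank_hFun S A).iterate_eq hfix fun q => blockRank_lt q.1)

/-- A fixed point `x* ∈ D_B` of `h` is a point of attraction of the synchronous
fixed-point iteration `x^{p+1} = h(x^p)`: there is an open neighborhood `U ⊆ D_B` of `x*`
such that all iterates starting in `U` stay in `D_B` and converge to `x*`. -/
theorem fixedPoint_attracts_synchronous_iteration
    {b N : ℕ} (hb : 1 ≤ b) (hN : 1 ≤ N) (S : Finset (Fin N × Fin N))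
    (hS : ∀ j : Fin N, (j, j) ∈ S)
    (A : Fin N → Fin N → Matrix (Fin b) (Fin b) ℝ)
    (xstar : BlockVec b N S) (hxstar : xstar ∈ DB b N S)
    (hfix : hFun S A xstar = xstar) :
    ∃ U : Set (BlockVec b N S), IsOpen U ∧ xstar ∈ U ∧ U ⊆ DB b N S ∧
      ∀ x0 ∈ U,
        (∀ p : ℕ, (hFun S A)^[p] x0 ∈ DB b N S) ∧
        Tendsto (fun p : ℕ => (hFun S A)^[p] x0) atTop (𝓝 xstar) :=
  fixedPoint_attracts_synchronous_iteration_general S A xstar hxstar hfix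
end

section
/- The map h has at most one fixed point: if x*, y* ∈ D_B satisfy h(x*) = x* and h(y*) = y*, then x* = y*. -/
open Filter Topology

/-!
The fixed point equations of `h` are the block-ILU recurrences: each block `H_{ij}(x)` only
involves blocks of `x` computed strictly earlier in the order "row 1 of `U`, column 1 of `L`,
row 2 of `U`, …". By strong induction along this order, two fixed points agree block by block.
-/

namespace BlockILU

variable {b N : ℕ} {S : Finset (Fin N × Fin N)}

/-- Row `i` of the upper factor gets rank `2i`, column `j` of the strictly lower factor `2j+1`. -/
def blockRank (i j : Fin N) : ℕ := 2 * min i.val j.val + if j < i then 1 else 0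

theorem Hmap_congr (A : Fin N → Fin N → Matrix (Fin b) (Fin b) ℝ) {x y : BlockVec b N S}
    {i j : Fin N} (h : ∀ k l, blockRank k l < blockRank i j → Xf S x k l = Xf S y k l) :
    Hmap S A x i j = Hmap S A y i j := by
  unfold Hmap
  split_ifs with hji
  · have hji' : j.val < i.val := hji
    have hdiag : Xf S x j j = Xf S y j j := h j j (by simp [blockRank, hji]; omega)
    have hsum : ∀ k ∈ Finset.univ.filter (fun k : Fin N => k < j),
        Xf S x i k * Xf S x k j = Xf S y i k * Xf S y k j := by
      intro k hk
      have hkj : k < j := (Finset.mem_filter.mp hk).2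
      have hkj' : k.val < j.val := hkj
      rw [h i k (by simp [blockRank, hji, hkj.trans hji]; omega),
        h k j (by simp [blockRank, hji, not_lt.mpr hkj.le]; omega)]
    rw [Finset.sum_congr rfl hsum, hdiag]
  · have hij : i.val ≤ j.val := not_lt.mp hji
    have hsum : ∀ k ∈ Finset.univ.filter (fun k : Fin N => k < i),
        Xf S x i k * Xf S x k j = Xf S y i k * Xf S y k j := by
      intro k hk
      have hki : k < i := (Finset.mem_filter.mp hk).2
      have hki' : k.val < i.val := hki
      have hkj : ¬ j < k := not_lt.mpr (hki.le.trans (not_lt.mp hji))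
      rw [h i k (by simp [blockRank, hji, hki]; omega),
        h k j (by simp [blockRank, hji, hkj]; omega)]
    rw [Finset.sum_congr rfl hsum]

theorem Xf_eq_Hmap_of_fixed {A : Fin N → Fin N → Matrix (Fin b) (Fin b) ℝ}
    {x : BlockVec b N S} (hfx : hFun S A x = x) {i j : Fin N} (hij : (i, j) ∈ S) :
    Xf S x i j = Hmap S A x i j := by
  ext k l
  rw [Xf, dif_pos hij]
  exact (congrFun (congrFun (congrFun hfx ⟨(i, j), hij⟩) k) l).symm

theorem Xf_eq_zero_of_notMem {x : BlockVec b N S} {i j : Fin N} (hij : (i, j) ∉ S) :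
    Xf S x i j = 0 :=
  dif_neg hij

theorem ext_Xf {x y : BlockVec b N S} (h : ∀ i j, Xf S x i j = Xf S y i j) : x = y := by
  funext ⟨⟨i, j⟩, hij⟩ k l
  have hxy := h i j
  rw [Xf, Xf, dif_pos hij, dif_pos hij] at hxy
  exact congrFun (congrFun (Matrix.of.injective hxy) k) l

theorem Xf_eq_of_fixed {A : Fin N → Fin N → Matrix (Fin b) (Fin b) ℝ}
    {x y : BlockVec b N S} (hfx : hFun S A x = x) (hfy : hFun S A y = y) (i j : Fin N) :
    Xf S x i j = Xf S y i j := by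
  induction hr : blockRank i j using Nat.strong_induction_on generalizing i j with
  | _ r ih =>
    by_cases hij : (i, j) ∈ S
    · rw [Xf_eq_Hmap_of_fixed hfx hij, Xf_eq_Hmap_of_fixed hfy hij]
      exact Hmap_congr A fun k l hkl => ih _ (hr ▸ hkl) k l rfl
    · rw [Xf_eq_zero_of_notMem hij, Xf_eq_zero_of_notMem hij]

end BlockILU

theorem hFun_fixedPoint_unique_general
    {b N : ℕ} (S : Finset (Fin N × Fin N))
    (A : Fin N → Fin N → Matrix (Fin b) (Fin b) ℝ)
    (xstar ystar : BlockVec b N S)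
    (hfx : hFun S A xstar = xstar) (hfy : hFun S A ystar = ystar) :
    xstar = ystar :=
  BlockILU.ext_Xf (BlockILU.Xf_eq_of_fixed hfx hfy)

/-- The block-ILU map `h` has at most one fixed point in `D_B`. -/
theorem hFun_fixedPoint_unique
    {b N : ℕ} (hb : 1 ≤ b) (hN : 1 ≤ N) (S : Finset (Fin N × Fin N))
    (hS : ∀ j : Fin N, (j, j) ∈ S)
    (A : Fin N → Fin N → Matrix (Fin b) (Fin b) ℝ)
    (xstar ystar : BlockVec b N S)
    (hx : xstar ∈ DB b N S) (hy : ystar ∈ DB b N S)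
    (hfx : hFun S A xstar = xstar) (hfy : hFun S A ystar = ystar) :
    xstar = ystar :=
  hFun_fixedPoint_unique_general S A xstar ystar hfx hfy
end

section
/- The map g has a unique fixed point x* ∈ ℝ^m, and for every initial vector x⁰ ∈ ℝ^m, the chunked sweep iteration reaches it in at most p sweeps: T^p(x⁰) = x*, where p is the number of chunks. -/
/-!
Since `g` is strictly lower triangular, `g^[n] x` and `g^[n] y` agree on the first `n`
coordinates, so `g^[m]` is constant; its value is the unique fixed point `x*`. For the sweep,
induction along the indices shows that if the input already equals `x*` on all chunks before
the chunk of `k`, then the sweep produces `x*_k`. Hence after `q` sweeps the first `q` chunks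
hold their final values.
-/

open Function

section LowerTriangular

variable {ι α : Type*}

def IsStrictlyLowerTriangular [LT ι] (g : (ι → α) → ι → α) : Prop :=
  ∀ k : ι, ∀ x y : ι → α, (∀ l : ι, l < k → x l = y l) → g x k = g y k

def IsChunkedSweep {κ : Type*} [LT ι] [DecidableLT ι] [DecidableEq κ]
    (g : (ι → α) → ι → α) (ch : ι → κ) (T : (ι → α) → ι → α) : Prop :=
  ∀ (x : ι → α) (k : ι), T x k = g (fun l => if l < k ∧ ch l = ch k then T x l else x l) k

variable {m : ℕ} {g : (Fin m → α) → Fin m → α}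

theorem IsStrictlyLowerTriangular.iterate_apply_eq_of_lt (hg : IsStrictlyLowerTriangular g)
    (n : ℕ) (x y : Fin m → α) (k : Fin m) (hk : (k : ℕ) < n) :
    g^[n] x k = g^[n] y k := by
  induction n generalizing k with
  | zero => omega
  | succ n ih =>
    rw [iterate_succ_apply', iterate_succ_apply']
    exact hg k _ _ fun l hl => ih l (by omega)

theorem IsStrictlyLowerTriangular.iterate_card_eq (hg : IsStrictlyLowerTriangular g)
    (x y : Fin m → α) : g^[m] x = g^[m] y :=
  funext fun k => hg.iterate_apply_eq_of_lt m x y k k.isLt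

theorem IsStrictlyLowerTriangular.isFixedPt_iterate_card (hg : IsStrictlyLowerTriangular g)
    (x : Fin m → α) : IsFixedPt g (g^[m] x) := by
  rw [IsFixedPt, ← iterate_succ_apply' g m, iterate_succ_apply]
  exact hg.iterate_card_eq (g x) x

theorem IsStrictlyLowerTriangular.eq_iterate_card_of_isFixedPt
    (hg : IsStrictlyLowerTriangular g) {y : Fin m → α} (hy : IsFixedPt g y) (x : Fin m → α) :
    y = g^[m] x :=
  calc y = g^[m] y := (iterate_fixed hy m).symm
    _ = g^[m] x := hg.iterate_card_eq y x

end LowerTriangular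

namespace IsChunkedSweep

variable {ι κ α : Type*} [LinearOrder ι] [WellFoundedLT ι] [PartialOrder κ] [DecidableEq κ]
  {g : (ι → α) → ι → α} {ch : ι → κ} {T : (ι → α) → ι → α} {xs : ι → α}

theorem apply_eq_of_forall_chunk_lt (hT : IsChunkedSweep g ch T)
    (hg : IsStrictlyLowerTriangular g) (hch : Monotone ch) (hxs : IsFixedPt g xs)
    (x : ι → α) (k : ι) (hx : ∀ l, ch l < ch k → x l = xs l) : T x k = xs k := by
  induction k using WellFoundedLT.induction with
  | ind k ih =>
    rw [hT, ← hxs]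
    refine hg k _ _ fun l hlk => ?_
    by_cases hchunk : ch l = ch k
    · rw [if_pos ⟨hlk, hchunk⟩]
      exact ih l hlk fun l' hl' => hx l' (hchunk ▸ hl')
    · rw [if_neg fun h => hchunk h.2]
      exact hx l ((hch hlk.le).lt_of_ne hchunk)

theorem iterate_apply_eq_of_chunk_lt {p : ℕ} {ch : ι → Fin p} (hT : IsChunkedSweep g ch T)
    (hg : IsStrictlyLowerTriangular g) (hch : Monotone ch) (hxs : IsFixedPt g xs)
    (q : ℕ) (x : ι → α) (l : ι) (hl : (ch l : ℕ) < q) : T^[q] x l = xs l := by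
  induction q generalizing l with
  | zero => omega
  | succ q ih =>
    rw [iterate_succ_apply']
    exact hT.apply_eq_of_forall_chunk_lt hg hch hxs _ l fun l' hl' =>
      ih l' (by omega)

theorem iterate_eq {p : ℕ} {ch : ι → Fin p} (hT : IsChunkedSweep g ch T)
    (hg : IsStrictlyLowerTriangular g) (hch : Monotone ch) (hxs : IsFixedPt g xs)
    (x : ι → α) : T^[p] x = xs :=
  funext fun l => hT.iterate_apply_eq_of_chunk_lt hg hch hxs p x l (ch l).isLt

end IsChunkedSweep

/-- `ch` assigns each index its chunk; the chunks are consecutive intervals because `ch` is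
monotone. -/
theorem chunked_sweep_converges_in_p_sweeps_general
    {m p : ℕ}
    (g : (Fin m → ℝ) → Fin m → ℝ)
    (hg : ∀ k : Fin m, ∀ x y : Fin m → ℝ, (∀ l : Fin m, l < k → x l = y l) →
      g x k = g y k)
    (ch : Fin m → Fin p) (hmono : Monotone ch)
    (T : (Fin m → ℝ) → Fin m → ℝ)
    (hT : ∀ (x : Fin m → ℝ) (k : Fin m),
      T x k = g (fun l => if l < k ∧ ch l = ch k then T x l else x l) k) :
    ∃ xs : Fin m → ℝ, g xs = xs ∧ (∀ ys : Fin m → ℝ, g ys = ys → ys = xs) ∧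
      ∀ x0 : Fin m → ℝ, T^[p] x0 = xs := by
  have hg : IsStrictlyLowerTriangular g := hg
  have hT : IsChunkedSweep g ch T := hT
  have hfix := hg.isFixedPt_iterate_card 0
  exact ⟨_, hfix, fun ys hys => hg.eq_iterate_card_of_isFixedPt hys 0,
    hT.iterate_eq hg hmono hfix⟩

/-- Let `g` have strictly lower triangular structure (each component `g_k` depends only
on the components with index `< k`), let `ch` assign to each index its chunk, with
chunks forming consecutive intervals (`ch` monotone and surjective onto `Fin p`), and
let `T` be the sweep operator: within each chunk entries are updated sequentially using
already-updated values from that chunk, while values from other chunks come from the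
previous sweep. Then `g` has a unique fixed point `x*`, and `T^[p] x⁰ = x*` for every
initial vector `x⁰`: the chunked sweep iteration converges in at most `p` sweeps. -/
theorem chunked_sweep_converges_in_p_sweeps
    {m p : ℕ} (hm : 1 ≤ m)
    (g : (Fin m → ℝ) → Fin m → ℝ)
    (hg : ∀ k : Fin m, ∀ x y : Fin m → ℝ, (∀ l : Fin m, l < k → x l = y l) →
      g x k = g y k)
    (ch : Fin m → Fin p) (hmono : Monotone ch) (hsurj : Function.Surjective ch)
    (T : (Fin m → ℝ) → Fin m → ℝ)
    (hT : ∀ (x : Fin m → ℝ) (k : Fin m),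
      T x k = g (fun l => if l < k ∧ ch l = ch k then T x l else x l) k) :
    ∃ xs : Fin m → ℝ, g xs = xs ∧ (∀ ys : Fin m → ℝ, g ys = ys → ys = xs) ∧
      ∀ x0 : Fin m → ℝ, T^[p] x0 = xs :=
  chunked_sweep_converges_in_p_sweeps_general g hg ch hmono T hT
end
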